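/- Let x, y be m-dimensional probability vectors with x ∈ S°(y), and x', y' be n-dimensional probability vectors with x' ∈ S°(y'). Then for any positive integers k, p, q: x^{⊗k} is an interior point of S(y^{⊗k}), and x^{⊗p} ⊗ x'^{⊗q} is an interior point of S(y^{⊗p} ⊗ y'^{⊗q}). -/

import Mathlib

open Finset

variable {ι κ : Type*}

/-- `eSum x l` is the sum of the `l` largest components of `x`. -/
noncomputable def eSum [Fintype ι] (x : ι → ℝ) (l : ℕ) : ℝ :=
  sSup {r : ℝ | ∃ s : Finset ι, s.card = l ∧ r = ∑ i ∈ s, x i}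

/-- Majorization `x ≺ y` for vectors over the same (finite) index type:
`e_l(x) ≤ e_l(y)` for all `1 ≤ l ≤ n - 1`, with equal total sums. -/
def Maj [Fintype ι] (x y : ι → ℝ) : Prop :=
  (∀ l : ℕ, 1 ≤ l → l < Fintype.card ι → eSum x l ≤ eSum y l) ∧
    ∑ i, x i = ∑ i, y i

/-- A probability vector: nonnegative components summing to 1. -/
def IsProbVec [Fintype ι] (x : ι → ℝ) : Prop :=
  (∀ i, 0 ≤ x i) ∧ ∑ i, x i = 1

/-- Kronecker product of two vectors. -/
def kron (x : ι → ℝ) (c : κ → ℝ) : ι × κ → ℝ := fun p => x p.1 * c p.2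

/-- `k`-fold Kronecker power of a vector. -/
def kpow (x : ι → ℝ) (k : ℕ) : (Fin k → ι) → ℝ := fun f => ∏ j, x (f j)

/-- Direct sum (concatenation) of two vectors. -/
def dsum (x : ι → ℝ) (c : κ → ℝ) : ι ⊕ κ → ℝ := Sum.elim x c

/-- `k`-fold direct sum (concatenation) of `x` with itself. -/
def dpow (x : ι → ℝ) (k : ℕ) : Fin k × ι → ℝ := fun p => x p.2

/-- `x ∈ S°(y)`: all partial-sum inequalities `e_l(x) < e_l(y)` are strict for
`1 ≤ l ≤ n - 1`, and the total sums coincide. -/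
def InteriorS [Fintype ι] (x y : ι → ℝ) : Prop :=
  (∀ l : ℕ, 1 ≤ l → l < Fintype.card ι → eSum x l < eSum y l) ∧
    ∑ i, x i = ∑ i, y i

/-- `d_x`: the number of nonzero components of `x`. -/
noncomputable def dsupp (x : ι → ℝ) : ℕ := Nat.card (Function.support x)

/-- The `α`-Renyi entropy `S^{(α)}(x)`; at `α = 1` it is the Shannon entropy. -/
noncomputable def renyi [Fintype ι] (x : ι → ℝ) (α : ℝ) : ℝ :=
  if α = 1 then -∑ i, x i * Real.logb 2 (x i)
  else (if 0 ≤ α then (1 : ℝ) else -1) / (1 - α) *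
    Real.logb 2 (∑ i, if x i = 0 then 0 else x i ^ α)

/-- The Renyi entropy of `x` is not less than that of `y`. -/
def RenyiGE [Fintype ι] [Fintype κ] (x : ι → ℝ) (y : κ → ℝ) : Prop :=
  (dsupp x > dsupp y ∧ ∀ α : ℝ, 0 ≤ α → renyi y α ≤ renyi x α) ∨
  (dsupp x = dsupp y ∧ ∀ α : ℝ, renyi y α ≤ renyi x α)

/-!
Kronecker powers are iterated Kronecker products, so everything reduces to a single product
`x ⊗ x'`. Let `s` be a set of `l` entries attaining `e_l(x ⊗ x')`, with `0 < l < mn`. As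
`x ∈ S°(y)` forces `x > 0`, a row `i` of `s` that is neither empty nor full, with `c` entries,
gives the strict bound `x_i e_c(x') < x_i e_c(y')`; summing over the rows yields
`e_l(x ⊗ x') < e_l(x ⊗ y') ≤ e_l(y ⊗ y')`. The last step is `x ≺ y ⇒ x ⊗ z ≺ y ⊗ z` for
`z ≥ 0`, which follows from `e_l(v) = min_t (l t + ∑ᵢ (vᵢ - t)⁺)` together with the fact that
`x ≺ y` gives `∑ᵢ (c xᵢ - t)⁺ ≤ ∑ᵢ (c yᵢ - t)⁺`. If no row of `s` is partial, some column is,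
and the same argument applies with the two factors exchanged.
-/

section eSum

variable [Fintype ι] [Fintype κ]

lemma eSum_set_finite (x : ι → ℝ) (l : ℕ) :
    {r : ℝ | ∃ s : Finset ι, s.card = l ∧ r = ∑ i ∈ s, x i}.Finite :=
  (Set.finite_range fun s : Finset ι => ∑ i ∈ s, x i).subset <| by
    rintro r ⟨s, -, rfl⟩
    exact ⟨s, rfl⟩

lemma sum_le_eSum (x : ι → ℝ) (s : Finset ι) : ∑ i ∈ s, x i ≤ eSum x s.card :=
  le_csSup (eSum_set_finite x _).bddAbove ⟨s, rfl, rfl⟩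

lemma exists_eSum_eq (x : ι → ℝ) {l : ℕ} (hl : l ≤ Fintype.card ι) :
    ∃ s : Finset ι, s.card = l ∧ eSum x l = ∑ i ∈ s, x i := by
  obtain ⟨s, -, hs⟩ := Finset.exists_subset_card_eq (s := univ) (by simpa using hl)
  obtain ⟨t, ht, h⟩ := Set.Nonempty.csSup_mem
    (⟨_, s, hs, rfl⟩ : {r : ℝ | ∃ s : Finset ι, s.card = l ∧ r = ∑ i ∈ s, x i}.Nonempty)
    (eSum_set_finite x l)
  exact ⟨t, ht, h⟩

lemma eSum_zero (x : ι → ℝ) : eSum x 0 = 0 := by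
  obtain ⟨s, hs, h⟩ := exists_eSum_eq x (Nat.zero_le _)
  rw [h, Finset.card_eq_zero.1 hs, sum_empty]

lemma eSum_card (x : ι → ℝ) : eSum x (Fintype.card ι) = ∑ i, x i := by
  obtain ⟨s, hs, h⟩ := exists_eSum_eq x le_rfl
  rw [h, (Finset.card_eq_iff_eq_univ s).1 hs]

lemma eSum_le_sum {x : ι → ℝ} (hx : ∀ i, 0 ≤ x i) {l : ℕ} (hl : l ≤ Fintype.card ι) :
    eSum x l ≤ ∑ i, x i := by
  obtain ⟨s, -, h⟩ := exists_eSum_eq x hl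
  exact h ▸ sum_le_univ_sum_of_nonneg fun i => hx i

lemma eSum_comp_equiv (e : κ ≃ ι) (x : ι → ℝ) (l : ℕ) : eSum (x ∘ e) l = eSum x l := by
  unfold eSum
  congr 1
  ext r
  constructor
  · rintro ⟨s, hs, rfl⟩
    exact ⟨s.map e.toEmbedding, by simpa using hs, by simp [Finset.sum_map]⟩
  · rintro ⟨s, hs, rfl⟩
    exact ⟨s.map e.symm.toEmbedding, by simpa using hs, by simp [Finset.sum_map]⟩

lemma eSum_le_mul_add_sum_max (x : ι → ℝ) {l : ℕ} (hl : l ≤ Fintype.card ι) (t : ℝ) :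
    eSum x l ≤ l * t + ∑ i, max (x i - t) 0 := by
  obtain ⟨s, rfl, h⟩ := exists_eSum_eq x hl
  calc eSum x s.card = ∑ i ∈ s, x i := h
    _ ≤ ∑ i ∈ s, (t + max (x i - t) 0) :=
      sum_le_sum fun i _ => by linarith [le_max_left (x i - t) 0]
    _ = s.card * t + ∑ i ∈ s, max (x i - t) 0 := by rw [sum_add_distrib, sum_const, nsmul_eq_mul]
    _ ≤ s.card * t + ∑ i, max (x i - t) 0 :=
      add_le_add_right (sum_le_univ_sum_of_nonneg fun i => le_max_right (x i - t) 0) _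

/-- The bound `eSum_le_mul_add_sum_max` is attained at the smallest entry of a maximizing set. -/
lemma exists_eSum_eq_mul_add_sum_max (x : ι → ℝ) {l : ℕ} (hl₀ : 1 ≤ l)
    (hl : l ≤ Fintype.card ι) : ∃ t, eSum x l = l * t + ∑ i, max (x i - t) 0 := by
  classical
  obtain ⟨s, rfl, h⟩ := exists_eSum_eq x hl
  obtain ⟨a, ha, hmin⟩ := Finset.exists_min_image s x (Finset.card_pos.1 hl₀)
  have hout : ∀ i ∉ s, x i ≤ x a := by
    intro i hi
    -- otherwise exchanging `a` for `i` would beat the maximum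
    by_contra! hlt
    have hcard : (insert i (s.erase a)).card = s.card := by
      rw [card_insert_of_notMem fun h => hi (mem_of_mem_erase h), card_erase_of_mem ha,
        Nat.sub_add_cancel (Finset.card_pos.2 ⟨a, ha⟩)]
    have := hcard ▸ sum_le_eSum x (insert i (s.erase a))
    rw [sum_insert fun h => hi (mem_of_mem_erase h), sum_erase_eq_sub ha, h] at this
    linarith
  refine ⟨x a, ?_⟩
  have hsupp : ∑ i ∈ s, max (x i - x a) 0 = ∑ i, max (x i - x a) 0 :=
    sum_subset (subset_univ s) fun i _ hi => max_eq_right (by linarith [hout i hi])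
  rw [← hsupp, sum_congr rfl fun i hi => max_eq_left (sub_nonneg.2 (hmin i hi)), sum_sub_distrib,
    sum_const, nsmul_eq_mul, h]
  ring

end eSum

section Maj

variable [Fintype ι] [Fintype κ] {x y : ι → ℝ}

lemma Maj.eSum_le (h : Maj x y) {l : ℕ} (hl : l ≤ Fintype.card ι) : eSum x l ≤ eSum y l := by
  rcases Nat.eq_zero_or_pos l with rfl | hl₀
  · rw [eSum_zero, eSum_zero]
  rcases hl.lt_or_eq with hlt | rfl
  · exact h.1 l hl₀ hlt
  · rw [eSum_card, eSum_card, h.2]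

lemma Maj.sum_max_mul_sub_le (h : Maj x y) {c : ℝ} (hc : 0 ≤ c) (u : ℝ) :
    ∑ i, max (c * x i - u) 0 ≤ ∑ i, max (c * y i - u) 0 := by
  classical
  set s := univ.filter fun i => u < c * x i
  obtain ⟨t, ht, hte⟩ := exists_eSum_eq y (card_le_univ s)
  have hs : ∑ i, max (c * x i - u) 0 = ∑ i ∈ s, (c * x i - u) := by
    rw [← sum_subset (subset_univ s) fun i _ hi => max_eq_right (by simpa [s] using hi)]
    exact sum_congr rfl fun i hi => max_eq_left (by linarith [(mem_filter.1 hi).2])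
  calc ∑ i, max (c * x i - u) 0 = c * ∑ i ∈ s, x i - s.card * u := by
        rw [hs, sum_sub_distrib, mul_sum, sum_const, nsmul_eq_mul]
    _ ≤ c * eSum y s.card - s.card * u := by
        gcongr
        exact (sum_le_eSum x s).trans (h.eSum_le (card_le_univ s))
    _ = ∑ i ∈ t, (c * y i - u) := by
        rw [hte, sum_sub_distrib, mul_sum, sum_const, nsmul_eq_mul, ht]
    _ ≤ ∑ i ∈ t, max (c * y i - u) 0 := sum_le_sum fun i _ => le_max_left _ _
    _ ≤ ∑ i, max (c * y i - u) 0 := sum_le_univ_sum_of_nonneg fun i => le_max_right _ _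

lemma Maj.eSum_kron_le (h : Maj x y) {z : κ → ℝ} (hz : ∀ j, 0 ≤ z j) {l : ℕ}
    (hl : l ≤ Fintype.card (ι × κ)) : eSum (kron x z) l ≤ eSum (kron y z) l := by
  rcases Nat.eq_zero_or_pos l with rfl | hl₀
  · rw [eSum_zero, eSum_zero]
  obtain ⟨t, ht⟩ := exists_eSum_eq_mul_add_sum_max (kron y z) hl₀ hl
  have hcols : ∑ p, max (kron x z p - t) 0 ≤ ∑ p, max (kron y z p - t) 0 := by
    simp only [Fintype.sum_prod_type_right, kron, mul_comm _ (z _)]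
    exact sum_le_sum fun j _ => h.sum_max_mul_sub_le (hz j) t
  calc eSum (kron x z) l ≤ l * t + ∑ p, max (kron x z p - t) 0 := eSum_le_mul_add_sum_max _ hl t
    _ ≤ l * t + ∑ p, max (kron y z p - t) 0 := add_le_add_right hcols _
    _ = eSum (kron y z) l := ht.symm

end Maj

section kron

variable [Fintype ι] [Fintype κ]

lemma sum_kron (x : ι → ℝ) (z : κ → ℝ) : ∑ p, kron x z p = (∑ i, x i) * ∑ j, z j := by
  simp only [kron, Fintype.sum_prod_type, sum_mul_sum]

lemma eSum_kron_comm (x : ι → ℝ) (z : κ → ℝ) (l : ℕ) :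
    eSum (kron x z) l = eSum (kron z x) l := by
  rw [← eSum_comp_equiv (Equiv.prodComm ι κ) (kron z x)]
  congr 1
  funext p
  exact mul_comm _ _

lemma sum_mul_eSum_le_eSum_kron (x : ι → ℝ) (z : κ → ℝ) (c : ι → ℕ)
    (hc : ∀ i, c i ≤ Fintype.card κ) : ∑ i, x i * eSum z (c i) ≤ eSum (kron x z) (∑ i, c i) := by
  classical
  choose t ht hte using fun i => exists_eSum_eq z (hc i)
  set s := univ.filter fun p : ι × κ => p.2 ∈ t p.1
  have hmem : ∀ p, p ∈ s ↔ p.1 ∈ univ ∧ p.2 ∈ t p.1 := by simp [s]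
  have hcard : s.card = ∑ i, c i := by
    rw [card_eq_sum_ones, sum_finset_product s univ t hmem]
    simp [ht]
  calc ∑ i, x i * eSum z (c i) = ∑ p ∈ s, kron x z p := by
        rw [sum_finset_product s univ t hmem]
        simp [kron, hte, mul_sum]
    _ ≤ eSum (kron x z) (∑ i, c i) := hcard ▸ sum_le_eSum _ s

end kron

section InteriorS

variable [Fintype ι] [Fintype κ] {x y : ι → ℝ} {x' y' : κ → ℝ}

lemma InteriorS.maj (h : InteriorS x y) : Maj x y := ⟨fun l hl₀ hl => (h.1 l hl₀ hl).le, h.2⟩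

lemma InteriorS.pos (h : InteriorS x y) (hy : ∀ i, 0 ≤ y i) (hx : 0 < ∑ i, x i) (i : ι) :
    0 < x i := by
  classical
  by_contra! hi
  have hcard : 0 < Fintype.card ι := Fintype.card_pos_iff.2 ⟨i⟩
  have hle : ∑ j, x j ≤ eSum x (Fintype.card ι - 1) := by
    calc ∑ j, x j ≤ ∑ j ∈ univ.erase i, x j := by rw [sum_erase_eq_sub (mem_univ i)]; linarith
      _ ≤ eSum x (Fintype.card ι - 1) := by
        simpa [card_erase_of_mem (mem_univ i)] using sum_le_eSum x (univ.erase i)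
  rcases Nat.eq_zero_or_pos (Fintype.card ι - 1) with h0 | hpos
  · rw [h0, eSum_zero] at hle
    linarith
  · linarith [h.1 _ hpos (by omega), eSum_le_sum hy (Nat.sub_le (Fintype.card ι) 1), h.2]

lemma InteriorS.comp_equiv (h : InteriorS x y) (e : κ ≃ ι) : InteriorS (x ∘ e) (y ∘ e) := by
  refine ⟨fun l hl₀ hl => ?_, by simp only [Function.comp_apply, e.sum_comp, h.2]⟩
  rw [eSum_comp_equiv, eSum_comp_equiv]
  exact h.1 l hl₀ (Fintype.card_congr e ▸ hl)

lemma sum_kron_lt_eSum_kron_of_partial_row (hx : ∀ i, 0 < x i) (hxy : Maj x y)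
    (h' : InteriorS x' y') (hy' : ∀ j, 0 ≤ y' j) {s : Finset (ι × κ)} {i : ι} {j j' : κ}
    (hj : (i, j) ∈ s) (hj' : (i, j') ∉ s) : ∑ p ∈ s, kron x x' p < eSum (kron y y') s.card := by
  classical
  set r : ι → Finset κ := fun i => univ.filter fun j => (i, j) ∈ s
  have hmem : ∀ p, p ∈ s ↔ p.1 ∈ univ ∧ p.2 ∈ r p.1 := by simp [r]
  have hrow : ∀ i, ∑ j ∈ r i, x' j ≤ eSum y' (r i).card := fun i =>
    (sum_le_eSum x' _).trans (h'.maj.eSum_le (card_le_univ _))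
  have hrow_lt : ∑ j ∈ r i, x' j < eSum y' (r i).card :=
    (sum_le_eSum x' _).trans_lt (h'.1 _ (card_pos.2 ⟨j, by simpa [r] using hj⟩)
      (card_lt_univ_of_notMem (x := j') (by simpa [r] using hj')))
  calc ∑ p ∈ s, kron x x' p = ∑ i, x i * ∑ j ∈ r i, x' j := by
        rw [sum_finset_product s univ r hmem]
        simp [kron, mul_sum]
    _ < ∑ i, x i * eSum y' (r i).card :=
        sum_lt_sum (fun i _ => mul_le_mul_of_nonneg_left (hrow i) (hx i).le)
          ⟨i, mem_univ i, mul_lt_mul_of_pos_left hrow_lt (hx i)⟩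
    _ ≤ eSum (kron x y') (∑ i, (r i).card) :=
        sum_mul_eSum_le_eSum_kron x y' _ fun i => card_le_univ _
    _ = eSum (kron x y') s.card := by
        rw [card_eq_sum_ones s, sum_finset_product s univ r hmem]
        simp
    _ ≤ eSum (kron y y') s.card := hxy.eSum_kron_le hy' (card_le_univ s)

lemma interiorS_kron (h : InteriorS x y) (h' : InteriorS x' y') (hy : ∀ i, 0 ≤ y i)
    (hy' : ∀ j, 0 ≤ y' j) (hx : 0 < ∑ i, x i) (hx' : 0 < ∑ j, x' j) :
    InteriorS (kron x x') (kron y y') := by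
  refine ⟨fun l hl₀ hl => ?_, by rw [sum_kron, sum_kron, h.2, h'.2]⟩
  obtain ⟨s, rfl, hs⟩ := exists_eSum_eq (kron x x') hl.le
  obtain ⟨p, hp⟩ := card_pos.1 hl₀
  obtain ⟨q, hq⟩ : ∃ q, q ∉ s := by
    simpa [eq_univ_iff_forall] using (card_lt_iff_ne_univ s).1 hl
  rw [hs]
  by_cases hpq : (p.1, q.2) ∈ s
  · -- the column `q.2` meets `s` at `(p.1, q.2)` but misses `q`: transpose
    set s' := s.map (Equiv.prodComm ι κ).toEmbedding
    have := sum_kron_lt_eSum_kron_of_partial_row (s := s') (i := q.2) (j := p.1) (j' := q.1)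
      (h'.pos hy' hx') h'.maj h hy (by simpa [s'] using hpq) (by simpa [s'] using hq)
    simpa [s', sum_map, kron, mul_comm, eSum_kron_comm y'] using this
  · exact sum_kron_lt_eSum_kron_of_partial_row (h.pos hy hx) h.maj h' hy' hp hpq

end InteriorS

lemma kpow_nonneg {x : ι → ℝ} (hx : ∀ i, 0 ≤ x i) (k : ℕ) (f : Fin k → ι) : 0 ≤ kpow x k f :=
  prod_nonneg fun j _ => hx (f j)

lemma kpow_succ (x : ι → ℝ) (k : ℕ) :
    kpow x (k + 1) = kron x (kpow x k) ∘ (Fin.consEquiv fun _ => ι).symm := by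
  funext f
  simp [kpow, kron, Fin.prod_univ_succ, Fin.consEquiv, Fin.tail]

section kpow

variable [Fintype ι]

lemma sum_kpow (x : ι → ℝ) (k : ℕ) : ∑ f, kpow x k f = (∑ i, x i) ^ k :=
  (Fintype.sum_pow x k).symm

lemma interiorS_kpow {x y : ι → ℝ} (h : InteriorS x y) (hy : ∀ i, 0 ≤ y i)
    (hx : 0 < ∑ i, x i) (k : ℕ) :
    InteriorS (kpow x k) (kpow y k) := by
  induction k with
  | zero =>
    refine ⟨fun l hl₀ hl => ?_, by rw [sum_kpow, sum_kpow, pow_zero, pow_zero]⟩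
    simp only [Fintype.card_unique] at hl
    omega
  | succ k ih =>
    rw [kpow_succ, kpow_succ]
    exact (interiorS_kron h ih hy (kpow_nonneg hy k) hx (by rw [sum_kpow]; positivity)).comp_equiv _

end kpow

theorem stmt8_general {m n : ℕ} (x y : Fin m → ℝ) (x' y' : Fin n → ℝ)
    (hx : IsProbVec x) (hy : IsProbVec y) (hx' : IsProbVec x') (hy' : IsProbVec y')
    (h : InteriorS x y) (h' : InteriorS x' y')
    (k p q : ℕ) :
    InteriorS (kpow x k) (kpow y k) ∧
      InteriorS (kron (kpow x p) (kpow x' q)) (kron (kpow y p) (kpow y' q)) := by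
  have hxsum : 0 < ∑ i, x i := hx.2 ▸ one_pos
  have hxsum' : 0 < ∑ j, x' j := hx'.2 ▸ one_pos
  refine ⟨interiorS_kpow h hy.1 hxsum k, ?_⟩
  exact interiorS_kron (interiorS_kpow h hy.1 hxsum p) (interiorS_kpow h' hy'.1 hxsum' q)
    (kpow_nonneg hy.1 p) (kpow_nonneg hy'.1 q) (by rw [sum_kpow]; positivity)
    (by rw [sum_kpow]; positivity)

/-- If `x ∈ S°(y)` and `x' ∈ S°(y')`, then for all positive `k, p, q`:
`x^{⊗k} ∈ S°(y^{⊗k})` and `x^{⊗p} ⊗ x'^{⊗q} ∈ S°(y^{⊗p} ⊗ y'^{⊗q})`. -/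
theorem stmt8 {m n : ℕ} (x y : Fin m → ℝ) (x' y' : Fin n → ℝ)
    (hx : IsProbVec x) (hy : IsProbVec y) (hx' : IsProbVec x') (hy' : IsProbVec y')
    (h : InteriorS x y) (h' : InteriorS x' y')
    (k p q : ℕ) (hk : 0 < k) (hp : 0 < p) (hq : 0 < q) :
    InteriorS (kpow x k) (kpow y k) ∧
      InteriorS (kron (kpow x p) (kpow x' q)) (kron (kpow y p) (kpow y' q)) :=
  stmt8_general x y x' y' hx hy hx' hy' h h' k p q
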